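/- Let Q be a finite acyclic quiver and i, j vertices of Q. Let P = P_{Q,i} (the path quiver of all paths in Q starting at i) and I = I_{Q,j} (the copath quiver of all paths in Q ending at j), as quivers over Q. Then the connected components of P ×_Q I are in bijection with the paths from i to j in Q, via the map sending a vertex (p, q) of the fiber product (p a path from i to some vertex k, q a path from k to j) to the concatenation p·q; moreover, the component corresponding to a path of length n is isomorphic over Q to the linear quiver with vertices 0, 1, …, n and arrows k−1 ⟶ k, whose structure map traces that path. -/

import Mathlib

/-! ## Bundled quivers and quivers over a fixed quiver -/

/-- A (bundled) quiver: a set of vertices, a set of arrows, and source/target maps. -/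
structure BQuiv : Type 1 where
  V : Type
  E : Type
  s : E → V
  t : E → V

namespace BQuiv

/-- A morphism of quivers (a "coloring"). -/
@[ext]
structure Hom (A B : BQuiv) where
  onV : A.V → B.V
  onE : A.E → B.E
  hs : ∀ e : A.E, B.s (onE e) = onV (A.s e)
  ht : ∀ e : A.E, B.t (onE e) = onV (A.t e)

/-- Composition of morphisms of quivers. -/
def Hom.comp {A B C : BQuiv} (f : Hom A B) (g : Hom B C) : Hom A C where
  onV v := g.onV (f.onV v)
  onE e := g.onE (f.onE e)
  hs e := by rw [g.hs, f.hs]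
  ht e := by rw [g.ht, f.ht]

/-- `Q.IsPathFrom a b es` : the list of edges `es` forms a path from `a` to `b` in `Q`. -/
def IsPathFrom (Q : BQuiv) : Q.V → Q.V → List Q.E → Prop
  | a, b, [] => a = b
  | a, b, e :: es => Q.s e = a ∧ Q.IsPathFrom (Q.t e) b es

theorem IsPathFrom.snoc {Q : BQuiv} {a b : Q.V} {es : List Q.E}
    (h : Q.IsPathFrom a b es) {e : Q.E} (he : Q.s e = b) :
    Q.IsPathFrom a (Q.t e) (es ++ [e]) := by
  induction es generalizing a with
  | nil =>
      simp only [IsPathFrom] at h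
      subst h
      exact ⟨he, rfl⟩
  | cons f fs ih =>
      obtain ⟨h1, h2⟩ := h
      exact ⟨h1, ih h2⟩

theorem IsPathFrom.append {Q : BQuiv} {a b c : Q.V} {es fs : List Q.E}
    (h : Q.IsPathFrom a b es) (h' : Q.IsPathFrom b c fs) :
    Q.IsPathFrom a c (es ++ fs) := by
  induction es generalizing a with
  | nil =>
      simp only [IsPathFrom] at h
      subst h
      exact h'
  | cons f gs ih =>
      obtain ⟨h1, h2⟩ := h
      exact ⟨h1, ih h2⟩

/-- `Q` is acyclic if every path from a vertex to itself is trivial. -/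
def IsAcyclic (Q : BQuiv) : Prop :=
  ∀ (v : Q.V) (es : List Q.E), Q.IsPathFrom v v es → es = []

/-! ## Subquivers -/

/-- A subquiver of `Q`: a subset of vertices and a subset of arrows with endpoints in it. -/
structure Sub (Q : BQuiv) where
  verts : Set Q.V
  edges : Set Q.E
  src_mem : ∀ e ∈ edges, Q.s e ∈ verts
  tgt_mem : ∀ e ∈ edges, Q.t e ∈ verts

/-- The quiver underlying a subquiver. -/
def Sub.toBQuiv {Q : BQuiv} (T : Sub Q) : BQuiv where
  V := T.verts
  E := T.edges
  s e := ⟨Q.s e.1, T.src_mem e.1 e.2⟩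
  t e := ⟨Q.t e.1, T.tgt_mem e.1 e.2⟩

/-- The inclusion of a subquiver; `E_T` is `(T.toBQuiv, T.incl)` as a quiver over `Q`. -/
def Sub.incl {Q : BQuiv} (T : Sub Q) : Hom T.toBQuiv Q where
  onV := Subtype.val
  onE := Subtype.val
  hs _ := rfl
  ht _ := rfl

/-- `T.IsPathIn a b es` : `es` is a path from `a` to `b` lying entirely in the
subquiver `T`. -/
def Sub.IsPathIn {Q : BQuiv} (T : Sub Q) (a b : Q.V) (es : List Q.E) : Prop :=
  a ∈ T.verts ∧ Q.IsPathFrom a b es ∧ ∀ e ∈ es, e ∈ T.edges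

/-- Intersection of subquivers. -/
def Sub.inter {Q : BQuiv} (S T : Sub Q) : Sub Q where
  verts := S.verts ∩ T.verts
  edges := S.edges ∩ T.edges
  src_mem e he := ⟨S.src_mem e he.1, T.src_mem e he.2⟩
  tgt_mem e he := ⟨S.tgt_mem e he.1, T.tgt_mem e he.2⟩

/-- The full subquiver (all of `Q`). -/
def fullSub (Q : BQuiv) : Sub Q where
  verts := Set.univ
  edges := Set.univ
  src_mem _ _ := trivial
  tgt_mem _ _ := trivial

/-- `S ⊆ T` for subquivers. -/
def Sub.le {Q : BQuiv} (S T : Sub Q) : Prop :=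
  S.verts ⊆ T.verts ∧ S.edges ⊆ T.edges

/-- The successor closure of a vertex `j` in a subquiver `U`: the vertices of `U`
reachable from `j` by a path in `U`, together with all arrows of `U` between them. -/
def succClosure {Q : BQuiv} (U : Sub Q) (j : Q.V) : Sub Q where
  verts := {v | ∃ es, U.IsPathIn j v es}
  edges := {e | e ∈ U.edges ∧ (∃ es, U.IsPathIn j (Q.s e) es) ∧ ∃ es, U.IsPathIn j (Q.t e) es}
  src_mem _ he := he.2.1
  tgt_mem _ he := he.2.2

/-- `s₀` is the unique source of the subquiver `S`. -/
def Sub.IsUniqueSource {Q : BQuiv} (S : Sub Q) (s₀ : Q.V) : Prop :=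
  s₀ ∈ S.verts ∧ (∀ e ∈ S.edges, Q.t e ≠ s₀) ∧
    ∀ v ∈ S.verts, (∀ e ∈ S.edges, Q.t e ≠ v) → v = s₀

/-- `u₀` is the unique sink of the subquiver `S`. -/
def Sub.IsUniqueSink {Q : BQuiv} (S : Sub Q) (u₀ : Q.V) : Prop :=
  u₀ ∈ S.verts ∧ (∀ e ∈ S.edges, Q.s e ≠ u₀) ∧
    ∀ v ∈ S.verts, (∀ e ∈ S.edges, Q.s e ≠ v) → v = u₀

/-! ## Path and copath quivers -/

/-- The path quiver `P_{T,t}`: vertices are the paths in `T` starting at `t` (recorded as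
a pair (endpoint, list of edges)); there is one arrow `p ⟶ p·α` for each path-vertex `p`
and each arrow `α` of `T` starting at the endpoint of `p`. -/
def PathQ {Q : BQuiv} (T : Sub Q) (t : Q.V) : BQuiv where
  V := {x : Q.V × List Q.E // T.IsPathIn t x.1 x.2}
  E := {y : (Q.V × List Q.E) × Q.E //
        T.IsPathIn t y.1.1 y.1.2 ∧ y.2 ∈ T.edges ∧ Q.s y.2 = y.1.1}
  s y := ⟨y.1.1, y.2.1⟩
  t y := ⟨(Q.t y.1.2, y.1.1.2 ++ [y.1.2]),
    ⟨y.2.1.1, (y.2.1.2.1).snoc y.2.2.2, by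
      intro e he
      rcases List.mem_append.1 he with h | h
      · exact y.2.1.2.2 e h
      · rw [List.mem_singleton.1 h]; exact y.2.2.1⟩⟩

/-- The structure map of the path quiver `P_{T,t}` as a quiver over `Q`: a path is sent
to its terminal vertex, and the arrow `(p, α)` to `α`. -/
def pathPi {Q : BQuiv} (T : Sub Q) (t : Q.V) : Hom (PathQ T t) Q where
  onV p := p.1.1
  onE y := y.1.2
  hs y := y.2.2.2
  ht _ := rfl

/-- The copath quiver `I_{T,u}`: vertices are the paths in `T` ending at `u` (recorded as
a pair (starting vertex, list of edges)); there is one arrow `α·q ⟶ q` for each vertex `q`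
and each arrow `α` of `T` ending at the starting vertex of `q`. -/
def CoPathQ {Q : BQuiv} (T : Sub Q) (u : Q.V) : BQuiv where
  V := {x : Q.V × List Q.E // T.IsPathIn x.1 u x.2}
  E := {y : Q.E × (Q.V × List Q.E) //
        T.IsPathIn y.2.1 u y.2.2 ∧ y.1 ∈ T.edges ∧ Q.t y.1 = y.2.1}
  s y := ⟨(Q.s y.1.1, y.1.1 :: y.1.2.2),
    ⟨T.src_mem _ y.2.2.1, ⟨rfl, by rw [y.2.2.2]; exact y.2.1.2.1⟩, by
      intro e he
      rcases List.mem_cons.1 he with h | h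
      · rw [h]; exact y.2.2.1
      · exact y.2.1.2.2 e h⟩⟩
  t y := ⟨y.1.2, y.2.1⟩

/-- The structure map of the copath quiver `I_{T,u}` as a quiver over `Q`: a path is sent
to its starting vertex, and the arrow `(α, q)` to `α`. -/
def coPathPi {Q : BQuiv} (T : Sub Q) (u : Q.V) : Hom (CoPathQ T u) Q where
  onV p := p.1.1
  onE y := y.1.1
  hs _ := rfl
  ht y := y.2.2.2

/-! ## Fiber products -/

/-- The fiber product of two quivers over `Q`. -/
def Fib {Q Q' Q'' : BQuiv} (f' : Hom Q' Q) (f'' : Hom Q'' Q) : BQuiv where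
  V := {p : Q'.V × Q''.V // f'.onV p.1 = f''.onV p.2}
  E := {e : Q'.E × Q''.E // f'.onE e.1 = f''.onE e.2}
  s e := ⟨(Q'.s e.1.1, Q''.s e.1.2), by rw [← f'.hs, ← f''.hs, e.2]⟩
  t e := ⟨(Q'.t e.1.1, Q''.t e.1.2), by rw [← f'.ht, ← f''.ht, e.2]⟩

/-- The structure map of the fiber product as a quiver over `Q`. -/
def fibHom {Q Q' Q'' : BQuiv} (f' : Hom Q' Q) (f'' : Hom Q'' Q) : Hom (Fib f' f'') Q where
  onV p := f'.onV p.1.1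
  onE e := f'.onE e.1.1
  hs e := f'.hs e.1.1
  ht e := f'.ht e.1.1

/-! ## Connected components -/

/-- Adjacency in the underlying undirected graph. -/
def Adj (X : BQuiv) (v w : X.V) : Prop :=
  ∃ e : X.E, (X.s e = v ∧ X.t e = w) ∨ (X.s e = w ∧ X.t e = v)

/-- Connectivity in the underlying undirected graph. -/
def Conn (X : BQuiv) : X.V → X.V → Prop :=
  Relation.ReflTransGen (Adj X)

/-- The connected component of the vertex `v₀` in `X`, as a quiver. -/
def Component (X : BQuiv) (v₀ : X.V) : BQuiv where
  V := {v : X.V // Conn X v₀ v}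
  E := {e : X.E // Conn X v₀ (X.s e)}
  s e := ⟨X.s e.1, e.2⟩
  t e := ⟨X.t e.1, e.2.tail ⟨e.1, Or.inl ⟨rfl, rfl⟩⟩⟩

/-- The inclusion of a connected component. -/
def Component.incl (X : BQuiv) (v₀ : X.V) : Hom (Component X v₀) X where
  onV := Subtype.val
  onE := Subtype.val
  hs _ := rfl
  ht _ := rfl

/-- A connected component of a quiver over `Q`, regarded as a quiver over `Q` via the
restricted structure map. -/
def componentHom {X Q : BQuiv} (h : Hom X Q) (v₀ : X.V) : Hom (Component X v₀) Q :=
  (Component.incl X v₀).comp h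

/-! ## Isomorphisms over `Q` and wrappings -/

/-- An isomorphism of quivers over `Q`: a morphism of quivers commuting with the
structure maps which is bijective on vertices and on arrows. -/
structure OverIso {A B Q : BQuiv} (f : Hom A Q) (g : Hom B Q) where
  hom : Hom A B
  comm : hom.comp g = f
  bijV : Function.Bijective hom.onV
  bijE : Function.Bijective hom.onE

/-- A morphism of quivers is a wrapping if it is injective on parallel arrows. -/
def IsWrapping {A B : BQuiv} (f : Hom A B) : Prop :=
  ∀ e₁ e₂ : A.E, A.s e₁ = A.s e₂ → A.t e₁ = A.t e₂ → f.onE e₁ = f.onE e₂ → e₁ = e₂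

/-! ## Linear quivers tracing a path -/

/-- The linear quiver with vertices `0, 1, …, n` and one arrow `k-1 ⟶ k` for `1 ≤ k ≤ n`. -/
def LinQ (n : ℕ) : BQuiv where
  V := Fin (n + 1)
  E := Fin n
  s := Fin.castSucc
  t := Fin.succ

/-- The vertex reached after `k` steps along a list of edges starting at `a`. -/
def vertAt (Q : BQuiv) : Q.V → List Q.E → ℕ → Q.V
  | a, _, 0 => a
  | a, [], _ + 1 => a
  | _, e :: es, k + 1 => vertAt Q (Q.t e) es k

theorem vertAt_s {Q : BQuiv} {a b : Q.V} {es : List Q.E} (h : Q.IsPathFrom a b es)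
    (k : Fin es.length) : Q.s (es.get k) = vertAt Q a es k.1 := by
  induction es generalizing a with
  | nil => exact absurd k.2 (by simp)
  | cons e es ih =>
      obtain ⟨h1, h2⟩ := h
      rcases k with ⟨k, hk⟩
      cases k with
      | zero => exact h1
      | succ k => exact ih h2 ⟨k, Nat.lt_of_succ_lt_succ hk⟩

theorem vertAt_t {Q : BQuiv} {a b : Q.V} {es : List Q.E} (h : Q.IsPathFrom a b es)
    (k : Fin es.length) : Q.t (es.get k) = vertAt Q a es (k.1 + 1) := by
  induction es generalizing a with
  | nil => exact absurd k.2 (by simp)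
  | cons e es ih =>
      obtain ⟨h1, h2⟩ := h
      rcases k with ⟨k, hk⟩
      cases k with
      | zero =>
          cases es with
          | nil => rfl
          | cons f fs => exact (vertAt_s h2 ⟨0, by simp⟩) ▸ (h2.1).symm ▸ rfl
      | succ k => exact ih h2 ⟨k, Nat.lt_of_succ_lt_succ hk⟩

/-- The linear quiver of length `es.length` tracing the path `es` from `a` to `b`,
as a quiver over `Q`. -/
def traceHom (Q : BQuiv) (a b : Q.V) (es : List Q.E) (h : Q.IsPathFrom a b es) :
    Hom (LinQ es.length) Q where
  onV k := vertAt Q a es k.1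
  onE k := es.get k
  hs k := vertAt_s h k
  ht k := vertAt_t h k

end BQuiv

open BQuiv

/-!
An arrow of `P_{Q,i} ×_Q I_{Q,j}` goes from `(p, α·q)` to `(p·α, q)`, so the concatenation
`p·q` is constant on connected components. Conversely, the vertices with concatenation `es`
are exactly the splittings `(es.take k, es.drop k)` for `k ≤ es.length`, and the arrows
between them are the ones from the `k`-th to the `(k+1)`-st splitting, one for each `k`,
labelled by the `k`-th edge of `es`. Hence `(p, q) ↦ p.length` identifies the component
with the linear quiver tracing `es`.
-/

namespace BQuiv

theorem Conn.symm {X : BQuiv} {v w : X.V} (h : Conn X v w) : Conn X w v :=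
  haveI : Std.Symm (Adj X) := ⟨fun _ _ ⟨e, he⟩ => ⟨e, he.symm⟩⟩
  Std.Symm.symm (r := Relation.ReflTransGen (Adj X)) _ _ h

section Paths

variable {Q : BQuiv}

theorem IsPathFrom.target_unique {a b c : Q.V} {es : List Q.E} (h : Q.IsPathFrom a b es)
    (h' : Q.IsPathFrom a c es) : b = c := by
  induction es generalizing a with
  | nil => exact h.symm.trans h'
  | cons e es ih => exact ih h.2 h'.2

theorem vertAt_append_length {a b : Q.V} {p : List Q.E} (h : Q.IsPathFrom a b p)
    (q : List Q.E) : vertAt Q a (p ++ q) p.length = b := by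
  induction p generalizing a with
  | nil =>
      subst h
      cases q <;> rfl
  | cons e es ih => exact ih h.2

theorem IsPathFrom.take {a b : Q.V} {es : List Q.E} (h : Q.IsPathFrom a b es) (k : ℕ) :
    Q.IsPathFrom a (vertAt Q a es k) (es.take k) := by
  induction es generalizing a k with
  | nil => cases k <;> rfl
  | cons e es ih =>
      cases k with
      | zero => rfl
      | succ k => exact ⟨h.1, ih h.2 k⟩

theorem IsPathFrom.drop {a b : Q.V} {es : List Q.E} (h : Q.IsPathFrom a b es) (k : ℕ) :
    Q.IsPathFrom (vertAt Q a es k) b (es.drop k) := by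
  induction es generalizing a k with
  | nil => cases k <;> exact h
  | cons e es ih =>
      cases k with
      | zero => exact h
      | succ k => exact ih h.2 k

theorem IsPathFrom.isPathIn_fullSub {a b : Q.V} {es : List Q.E} (h : Q.IsPathFrom a b es) :
    (fullSub Q).IsPathIn a b es :=
  ⟨Set.mem_univ _, h, fun _ _ => Set.mem_univ _⟩

end Paths

/-- `P_{Q,i} ×_Q I_{Q,j}`. -/
abbrev PathCopathFib (Q : BQuiv) (i j : Q.V) : BQuiv :=
  Fib (pathPi (fullSub Q) i) (coPathPi (fullSub Q) j)

namespace PathCopathFib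

variable {Q : BQuiv} {i j : Q.V}

def pathPart (v : (PathCopathFib Q i j).V) : List Q.E := v.1.1.1.2

def copathPart (v : (PathCopathFib Q i j).V) : List Q.E := v.1.2.1.2

def concat (v : (PathCopathFib Q i j).V) : {es : List Q.E // Q.IsPathFrom i j es} :=
  ⟨pathPart v ++ copathPart v, v.1.1.2.2.1.append <| by
    rw [show v.1.1.1.1 = v.1.2.1.1 from v.2]
    exact v.1.2.2.2.1⟩

theorem vert_ext {v w : (PathCopathFib Q i j).V}
    (hp : pathPart v = pathPart w) (hq : copathPart v = copathPart w) : v = w := by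
  obtain ⟨⟨⟨⟨b, p⟩, hbp⟩, ⟨⟨c, q⟩, hcq⟩⟩, hbc⟩ := v
  obtain ⟨⟨⟨⟨b', p'⟩, hbp'⟩, ⟨⟨c', q'⟩, hcq'⟩⟩, hbc'⟩ := w
  obtain rfl : p = p' := hp
  obtain rfl : q = q' := hq
  obtain rfl : b = b' := hbp.2.1.target_unique hbp'.2.1
  obtain rfl : c = c' := (hbc : b = c).symm.trans hbc'
  rfl

theorem s_injective : Function.Injective (PathCopathFib Q i j).s := by
  rintro ⟨⟨⟨⟨⟨b, p⟩, α⟩, hp⟩, ⟨⟨α', c, q⟩, hq⟩⟩, hα⟩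
    ⟨⟨⟨⟨⟨b', p'⟩, β⟩, hp'⟩, ⟨⟨β', c', q'⟩, hq'⟩⟩, hβ⟩ h
  obtain rfl : b = b' := congrArg (fun v => v.1.1.1.1) h
  obtain rfl : p = p' := congrArg pathPart h
  obtain ⟨rfl, rfl⟩ : α' = β' ∧ q = q' := List.cons.inj (congrArg copathPart h)
  obtain rfl : α = α' := hα
  obtain rfl : β = α := hβ
  obtain rfl : c = c' := hq.2.2.symm.trans hq'.2.2
  rfl

theorem pathPart_t (e : (PathCopathFib Q i j).E) :
    pathPart ((PathCopathFib Q i j).t e)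
      = pathPart ((PathCopathFib Q i j).s e) ++ [e.1.1.1.2] :=
  rfl

theorem copathPart_s (e : (PathCopathFib Q i j).E) :
    copathPart ((PathCopathFib Q i j).s e)
      = e.1.1.1.2 :: copathPart ((PathCopathFib Q i j).t e) :=
  congrArg (· :: _) e.2.symm

theorem concat_s_eq_concat_t (e : (PathCopathFib Q i j).E) :
    concat ((PathCopathFib Q i j).s e) = concat ((PathCopathFib Q i j).t e) := by
  apply Subtype.ext
  simp only [concat, copathPart_s, pathPart_t, List.append_assoc, List.singleton_append]

theorem concat_eq_of_conn {v w : (PathCopathFib Q i j).V} (h : Conn _ v w) :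
    concat v = concat w := by
  induction h with
  | refl => rfl
  | tail _ hadj ih =>
      obtain ⟨e, ⟨rfl, rfl⟩ | ⟨rfl, rfl⟩⟩ := hadj
      · exact ih.trans (concat_s_eq_concat_t e)
      · exact ih.trans (concat_s_eq_concat_t e).symm

theorem eq_of_concat_eq_of_length_eq {v w : (PathCopathFib Q i j).V}
    (hc : (concat v).1 = (concat w).1) (hl : (pathPart v).length = (pathPart w).length) :
    v = w := by
  have hp : pathPart v = pathPart w := by
    simpa [concat, hl] using congrArg (List.take (pathPart w).length) hc
  have hq : copathPart v = copathPart w := by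
    simpa [concat, hl] using congrArg (List.drop (pathPart w).length) hc
  exact vert_ext hp hq

def splitVert {es : List Q.E} (h : Q.IsPathFrom i j es) (k : ℕ) : (PathCopathFib Q i j).V :=
  ⟨(⟨(vertAt Q i es k, es.take k), (h.take k).isPathIn_fullSub⟩,
    ⟨(vertAt Q i es k, es.drop k), (h.drop k).isPathIn_fullSub⟩), rfl⟩

def splitEdge {es : List Q.E} (h : Q.IsPathFrom i j es) (k : ℕ) (hk : k < es.length) :
    (PathCopathFib Q i j).E :=
  ⟨(⟨((vertAt Q i es k, es.take k), es[k]),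
      (h.take k).isPathIn_fullSub, Set.mem_univ _, vertAt_s h ⟨k, hk⟩⟩,
    ⟨(es[k], (vertAt Q i es (k + 1), es.drop (k + 1))),
      (h.drop (k + 1)).isPathIn_fullSub, Set.mem_univ _, vertAt_t h ⟨k, hk⟩⟩), rfl⟩

theorem concat_splitVert {es : List Q.E} (h : Q.IsPathFrom i j es) (k : ℕ) :
    (concat (splitVert h k)).1 = es :=
  List.take_append_drop k es

theorem length_pathPart_splitVert {es : List Q.E} (h : Q.IsPathFrom i j es) {k : ℕ}
    (hk : k ≤ es.length) : (pathPart (splitVert h k)).length = k :=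
  List.length_take_of_le hk

theorem splitEdge_s {es : List Q.E} (h : Q.IsPathFrom i j es) (k : ℕ) (hk : k < es.length) :
    (PathCopathFib Q i j).s (splitEdge h k hk) = splitVert h k :=
  vert_ext rfl (List.drop_eq_getElem_cons hk).symm

theorem splitEdge_t {es : List Q.E} (h : Q.IsPathFrom i j es) (k : ℕ) (hk : k < es.length) :
    (PathCopathFib Q i j).t (splitEdge h k hk) = splitVert h (k + 1) :=
  vert_ext (List.take_concat_get' es k hk) rfl

theorem conn_splitVert_zero {es : List Q.E} (h : Q.IsPathFrom i j es) {k : ℕ}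
    (hk : k ≤ es.length) : Conn _ (splitVert h 0) (splitVert h k) := by
  induction k with
  | zero => exact .refl
  | succ k ih =>
      exact (ih (by omega)).tail
        ⟨splitEdge h k hk, .inl ⟨splitEdge_s h k hk, splitEdge_t h k hk⟩⟩

theorem eq_splitVert (v : (PathCopathFib Q i j).V) :
    v = splitVert (concat v).2 (pathPart v).length :=
  eq_of_concat_eq_of_length_eq (concat_splitVert _ _).symm
    (length_pathPart_splitVert _ (by simp [concat])).symm

theorem conn_of_concat_eq {v w : (PathCopathFib Q i j).V} (h : concat v = concat w) :
    Conn _ v w := by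
  have hw := eq_splitVert w
  rw [← h] at hw
  rw [eq_splitVert v, hw]
  exact (conn_splitVert_zero _ (by simp [concat])).symm.trans
    (conn_splitVert_zero _ (by rw [h]; simp [concat]))

theorem length_pathPart_le (v : (PathCopathFib Q i j).V) :
    (pathPart v).length ≤ (concat v).1.length := by
  simp [concat]

theorem length_pathPart_s_lt (e : (PathCopathFib Q i j).E) :
    (pathPart ((PathCopathFib Q i j).s e)).length
      < (concat ((PathCopathFib Q i j).s e)).1.length := by
  simp [concat, copathPart_s]

variable (v₀ : (PathCopathFib Q i j).V)

def componentToLinQ :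
    Hom (Component (PathCopathFib Q i j) v₀) (LinQ (concat v₀).1.length) where
  onV v := ⟨(pathPart v.1).length,
    Nat.lt_succ_of_le ((concat_eq_of_conn v.2).symm ▸ length_pathPart_le v.1)⟩
  onE e := ⟨(pathPart ((PathCopathFib Q i j).s e.1)).length,
    (concat_eq_of_conn e.2).symm ▸ length_pathPart_s_lt e.1⟩
  hs _ := rfl
  ht e := Fin.ext (by simp [LinQ, Component, pathPart_t])

theorem componentToLinQ_comp_traceHom :
    (componentToLinQ v₀).comp (traceHom Q i j (concat v₀).1 (concat v₀).2)
      = componentHom (fibHom (pathPi (fullSub Q) i) (coPathPi (fullSub Q) j)) v₀ := by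
  apply Hom.ext
  · funext v
    show vertAt Q i (concat v₀).1 (pathPart v.1).length = v.1.1.1.1.1
    rw [concat_eq_of_conn v.2]
    exact vertAt_append_length v.1.1.1.2.2.1 _
  · funext e
    refine List.getElem_of_append (l₂ := copathPart ((PathCopathFib Q i j).t e.1)) ?_ rfl
    rw [concat_eq_of_conn e.2]
    exact congrArg (_ ++ ·) (copathPart_s e.1)

theorem componentToLinQ_onV_bijective : Function.Bijective (componentToLinQ v₀).onV := by
  constructor
  · intro v w hvw
    exact Subtype.ext <| eq_of_concat_eq_of_length_eq
      (by rw [← concat_eq_of_conn v.2, ← concat_eq_of_conn w.2]) (congrArg Fin.val hvw)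
  · rintro ⟨k, hk⟩
    refine ⟨⟨splitVert (concat v₀).2 k,
        conn_of_concat_eq (Subtype.ext (concat_splitVert _ _).symm)⟩,
      Fin.ext (length_pathPart_splitVert (concat v₀).2 (Nat.lt_succ_iff.1 hk))⟩

theorem componentToLinQ_onE_bijective : Function.Bijective (componentToLinQ v₀).onE := by
  constructor
  · intro e f hef
    exact Subtype.ext <| s_injective <| eq_of_concat_eq_of_length_eq
      (by rw [← concat_eq_of_conn e.2, ← concat_eq_of_conn f.2]) (congrArg Fin.val hef)
  · rintro ⟨k, hk⟩
    have hs := splitEdge_s (concat v₀).2 k hk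
    refine ⟨⟨splitEdge (concat v₀).2 k hk, ?_⟩, Fin.ext ?_⟩
    · exact hs ▸ conn_of_concat_eq (Subtype.ext (concat_splitVert _ _).symm)
    · exact (congrArg (fun v => (pathPart v).length) hs).trans
        (length_pathPart_splitVert _ hk.le)

def componentOverIso :
    OverIso (componentHom (fibHom (pathPi (fullSub Q) i) (coPathPi (fullSub Q) j)) v₀)
      (traceHom Q i j (concat v₀).1 (concat v₀).2) :=
  ⟨componentToLinQ v₀, componentToLinQ_comp_traceHom v₀, componentToLinQ_onV_bijective v₀,
    componentToLinQ_onE_bijective v₀⟩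

end PathCopathFib

end BQuiv

theorem components_pathQuiver_prod_copathQuiver_biject_paths_general
    (Q : BQuiv) (i j : Q.V) :
    ∃ F : (Fib (pathPi (fullSub Q) i) (coPathPi (fullSub Q) j)).V →
        {es : List Q.E // Q.IsPathFrom i j es},
      (∀ v, (F v).1 = v.1.1.1.2 ++ v.1.2.1.2) ∧
      (∀ v w, Conn (Fib (pathPi (fullSub Q) i) (coPathPi (fullSub Q) j)) v w → F v = F w) ∧
      (∀ v w, F v = F w → Conn (Fib (pathPi (fullSub Q) i) (coPathPi (fullSub Q) j)) v w) ∧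
      Function.Surjective F ∧
      ∀ v₀, Nonempty
        (OverIso (componentHom (fibHom (pathPi (fullSub Q) i) (coPathPi (fullSub Q) j)) v₀)
          (traceHom Q i j (F v₀).1 (F v₀).2)) :=
  open PathCopathFib in
  ⟨concat, fun _ => rfl, fun _ _ => concat_eq_of_conn, fun _ _ => conn_of_concat_eq,
    fun es => ⟨splitVert es.2 0, Subtype.ext (concat_splitVert es.2 0)⟩,
    fun v₀ => ⟨componentOverIso v₀⟩⟩

/-- The connected components of `P_{Q,i} ×_Q I_{Q,j}` are in bijection
with the paths from `i` to `j` in `Q`, via the map sending a vertex `(p, q)` to the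
concatenation `p·q`; the component of a vertex is isomorphic over `Q` to the linear
quiver tracing the corresponding path. -/
theorem components_pathQuiver_prod_copathQuiver_biject_paths
    (Q : BQuiv) [Fintype Q.V] [Fintype Q.E] (hQ : Q.IsAcyclic) (i j : Q.V) :
    ∃ F : (Fib (pathPi (fullSub Q) i) (coPathPi (fullSub Q) j)).V →
        {es : List Q.E // Q.IsPathFrom i j es},
      (∀ v, (F v).1 = v.1.1.1.2 ++ v.1.2.1.2) ∧
      (∀ v w, Conn (Fib (pathPi (fullSub Q) i) (coPathPi (fullSub Q) j)) v w → F v = F w) ∧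
      (∀ v w, F v = F w → Conn (Fib (pathPi (fullSub Q) i) (coPathPi (fullSub Q) j)) v w) ∧
      Function.Surjective F ∧
      ∀ v₀, Nonempty
        (OverIso (componentHom (fibHom (pathPi (fullSub Q) i) (coPathPi (fullSub Q) j)) v₀)
          (traceHom Q i j (F v₀).1 (F v₀).2)) :=
  components_pathQuiver_prod_copathQuiver_biject_paths_general Q i j
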